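/- arXiv:2302.10387 — 5 statements merged into one kernel-verified Lean document; each statement's English description precedes it below -/
import Mathlib

section
/- Let F be a finite field with q elements, q ≡ 3 (mod 4). If (a, b) is an admissible pair in F (i.e., a, b ∈ F are nonzero, a ≠ b, a ≠ −b, and ab is a square in F), then, setting a′ = (a + b)/2, there exists a unique b′ ∈ F such that b′² = ab and a′b′ is a nonzero square in F; moreover, the resulting pair (a′, b′) is again admissible: a′ and b′ are nonzero, a′ ≠ b′, a′ ≠ −b′, and a′b′ is a square in F. -/
/-- A pair `(a, b)` of elements of a field is admissible if `a ≠ 0`, `b ≠ 0`, `a ≠ b`,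
`a ≠ -b`, and `a*b` is a square. -/
def IsAdmissible {F : Type*} [Field F] (a b : F) : Prop :=
  a ≠ 0 ∧ b ≠ 0 ∧ a ≠ b ∧ a ≠ -b ∧ IsSquare (a * b)

lemma not_sq_neg {F : Type*} [Field F] [Fintype F] (hq : Fintype.card F % 4 = 3)
    {x : F} (hx : x ≠ 0) (h1 : IsSquare x) (h2 : IsSquare (-x)) : False := by
  have hneg : ¬ IsSquare (-1 : F) := by
    rw [FiniteField.isSquare_neg_one_iff]; simp [hq]
  obtain ⟨s, hs⟩ := h1
  obtain ⟨t, ht⟩ := h2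
  have hs0 : s ≠ 0 := by rintro rfl; exact hx (by simpa using hs)
  refine hneg ⟨t * s⁻¹, ?_⟩
  field_simp
  linear_combination hs + ht

lemma sq_or_sq_neg {F : Type*} [Field F] [Fintype F] (hq : Fintype.card F % 4 = 3)
    {x : F} (hx : x ≠ 0) : IsSquare x ∨ IsSquare (-x) := by
  classical
  by_contra h
  push_neg at h
  obtain ⟨h1, h2⟩ := h
  rw [← quadraticChar_neg_one_iff_not_isSquare] at h1 h2
  have := quadraticChar_neg_one_iff_not_isSquare (F := F) (a := -1)
  have hn1 : quadraticChar F (-1) = -1 := this.mpr (by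
    rw [FiniteField.isSquare_neg_one_iff]; simp [hq])
  have : quadraticChar F (-x) = quadraticChar F (-1) * quadraticChar F x := by
    rw [← map_mul]; ring_nf
  rw [h1, h2, hn1] at this
  norm_num at this

/-- For a finite field `F` with `q ≡ 3 (mod 4)` elements and an admissible pair `(a, b)`,
setting `a' = (a + b)/2`, there is a unique `b'` with `b'^2 = a*b` such that `a'*b'` is a
nonzero square; moreover the resulting pair `(a', b')` is again admissible. -/
theorem agm_step_exists_unique_and_admissible
    (F : Type*) [Field F] [Fintype F] (hq : Fintype.card F % 4 = 3)
    (a b : F) (hab : IsAdmissible a b) :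
    ∃ b' : F, (b' ^ 2 = a * b ∧ ((a + b) / 2) * b' ≠ 0 ∧ IsSquare (((a + b) / 2) * b')) ∧
      (∀ c : F, (c ^ 2 = a * b ∧ ((a + b) / 2) * c ≠ 0 ∧ IsSquare (((a + b) / 2) * c)) →
        c = b') ∧
      IsAdmissible ((a + b) / 2) b' := by
  obtain ⟨ha, hb, hne, hne', hsq⟩ := hab
  have hchar : ringChar F ≠ 2 := by
    intro h
    have := FiniteField.even_card_of_char_two (F := F) h
    omega
  have h2 : (2 : F) ≠ 0 := Ring.two_ne_zero hchar
  set a' : F := (a + b) / 2 with ha'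
  have ha'0 : a' ≠ 0 := by
    rw [ha', div_ne_zero_iff]
    refine ⟨fun h => hne' ?_, h2⟩
    linear_combination h
  have habne : a * b ≠ 0 := mul_ne_zero ha hb
  obtain ⟨r, hr⟩ := hsq
  have hr' : r ^ 2 = a * b := by rw [sq]; exact hr.symm
  have hr0 : r ≠ 0 := by rintro rfl; exact habne (by simpa using hr'.symm)
  -- choose b'
  have key : ∃ b' : F, b' ^ 2 = a * b ∧ IsSquare (a' * b') := by
    rcases sq_or_sq_neg hq (mul_ne_zero ha'0 hr0) with h | h
    · exact ⟨r, hr', h⟩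
    · exact ⟨-r, by rw [neg_pow]; simpa using hr', by rw [mul_neg]; exact h⟩
  obtain ⟨b', hb'sq, hb'issq⟩ := key
  have hb'0 : b' ≠ 0 := by rintro rfl; exact habne (by simpa using hb'sq.symm)
  have hprod0 : a' * b' ≠ 0 := mul_ne_zero ha'0 hb'0
  refine ⟨b', ⟨hb'sq, hprod0, hb'issq⟩, ?_, ?_⟩
  · rintro c ⟨hc1, hc2, hc3⟩
    have hcases : c = b' ∨ c = -b' := by
      have : (c - b') * (c + b') = 0 := by ring_nf; linear_combination hc1 - hb'sq
      rcases mul_eq_zero.mp this with h | h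
      · left; exact sub_eq_zero.mp h
      · right; linear_combination h
    rcases hcases with rfl | rfl
    · rfl
    · exfalso
      exact not_sq_neg hq hprod0 hb'issq (by rw [mul_neg] at hc3; simpa using hc3) |>.elim
  · refine ⟨ha'0, hb'0, ?_, ?_, hb'issq⟩
    · intro h
      have h3 : a' ^ 2 = a * b := by rw [h, hb'sq]
      rw [ha'] at h3
      field_simp at h3
      have h4 : (a - b) ^ 2 = 0 := by linear_combination h3
      have h5 := pow_eq_zero_iff (n := 2) (by norm_num) |>.mp h4
      exact hne (by linear_combination h5)
    · intro h
      have h3 : a' ^ 2 = a * b := by rw [h, neg_sq, hb'sq]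
      rw [ha'] at h3
      field_simp at h3
      have h4 : (a - b) ^ 2 = 0 := by linear_combination h3
      have h5 := pow_eq_zero_iff (n := 2) (by norm_num) |>.mp h4
      exact hne (by linear_combination h5)
end

section
/- Let F be a finite field with q elements, q ≡ 3 (mod 4), and let AGM denote the map sending an admissible pair (a, b) to the admissible pair ((a+b)/2, b′), where b′ is the unique element with b′² = ab and (a+b)b′/2 a nonzero square. Then for admissible pairs (a, b) and (c, d), one has AGM(a, b) = AGM(c, d) if and only if (c, d) = (a, b) or (c, d) = (b, a). In particular, every admissible pair in the image of AGM has exactly two preimages. -/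
/-- The type of admissible pairs in `F`. -/
def AdmPair (F : Type*) [Field F] : Type _ := {v : F × F // IsAdmissible v.1 v.2}

/-- `agm` is the AGM map on admissible pairs: it sends `(a, b)` to `((a + b)/2, b')` where `b'`
is the unique element with `b'^2 = a*b` and `((a + b)/2) * b'` a nonzero square. -/
def IsAGMMap {F : Type*} [Field F] (agm : AdmPair F → AdmPair F) : Prop :=
  ∀ v : AdmPair F,
    (agm v).1.1 = (v.1.1 + v.1.2) / 2 ∧
    (agm v).1.2 ^ 2 = v.1.1 * v.1.2 ∧
    (agm v).1.1 * (agm v).1.2 ≠ 0 ∧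
    IsSquare ((agm v).1.1 * (agm v).1.2)

theorem two_ne_zero_of_not_isSquare_neg_one {R : Type*} [Ring R] (h : ¬IsSquare (-1 : R)) :
    (2 : R) ≠ 0 := by
  intro h2
  rw [neg_eq_of_add_eq_zero_right (one_add_one_eq_two.trans h2)] at h
  exact h IsSquare.one

theorem not_isSquare_neg_of_isSquare {F : Type*} [Field F] (h : ¬IsSquare (-1 : F)) {x : F}
    (hx : x ≠ 0) (hsq : IsSquare x) : ¬IsSquare (-x) := by
  intro hsq'
  have : (-1 : F) = -x * x⁻¹ := by field_simp
  exact h (this ▸ hsq'.mul hsq.inv)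

theorem eq_of_sq_eq_of_isSquare_mul {F : Type*} [Field F] (h : ¬IsSquare (-1 : F)) {x y z : F}
    (hsq : y ^ 2 = z ^ 2) (hy : IsSquare (x * y)) (hz : x * z ≠ 0) (hz' : IsSquare (x * z)) :
    y = z := by
  refine (sq_eq_sq_iff_eq_or_eq_neg.1 hsq).resolve_right fun hyz => ?_
  exact not_isSquare_neg_of_isSquare h hz hz' (by rwa [hyz, mul_neg] at hy)

theorem Prod.eq_or_eq_swap_of_add_eq_of_mul_eq {R : Type*} [CommRing R] [NoZeroDivisors R]
    {p q : R × R} (hadd : p.1 + p.2 = q.1 + q.2) (hmul : p.1 * p.2 = q.1 * q.2) :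
    q = p ∨ q = p.swap := by
  have hroot : (q.1 - p.1) * (q.1 - p.2) = 0 := by linear_combination hmul - q.1 * hadd
  rcases mul_eq_zero.1 hroot with h | h
  · exact .inl (Prod.ext (by linear_combination h) (by linear_combination -hadd - h))
  · refine .inr (Prod.ext ?_ ?_)
    · simp only [Prod.fst_swap]; linear_combination h
    · simp only [Prod.snd_swap]; linear_combination -hadd - h

theorem IsAdmissible.swap {F : Type*} [Field F] {a b : F} (h : IsAdmissible a b) :
    IsAdmissible b a := by
  obtain ⟨ha, hb, hab, hanb, hsq⟩ := h
  exact ⟨hb, ha, Ne.symm hab, fun h => hanb (by rw [h, neg_neg]), mul_comm a b ▸ hsq⟩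

namespace AdmPair

variable {F : Type*} [Field F]

def swap (v : AdmPair F) : AdmPair F := ⟨v.1.swap, v.2.swap⟩

theorem swap_ne_self (v : AdmPair F) : v.swap ≠ v := fun h =>
  v.2.2.2.1 (congrArg (fun w : AdmPair F => w.1.2) h)

end AdmPair

namespace IsAGMMap

variable {F : Type*} [Field F] {agm : AdmPair F → AdmPair F}

theorem add_eq_add (hagm : IsAGMMap agm) (h2 : (2 : F) ≠ 0) {v w : AdmPair F}
    (h : agm v = agm w) : v.1.1 + v.1.2 = w.1.1 + w.1.2 := by
  have := (hagm v).1.symm.trans (h ▸ (hagm w).1)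
  rwa [div_left_inj' h2] at this

theorem mul_eq_mul (hagm : IsAGMMap agm) {v w : AdmPair F} (h : agm v = agm w) :
    v.1.1 * v.1.2 = w.1.1 * w.1.2 := by
  rw [← (hagm v).2.1, ← (hagm w).2.1, h]

theorem eq_of_add_eq_of_mul_eq (hagm : IsAGMMap agm) (h : ¬IsSquare (-1 : F)) {v w : AdmPair F}
    (hadd : v.1.1 + v.1.2 = w.1.1 + w.1.2) (hmul : v.1.1 * v.1.2 = w.1.1 * w.1.2) :
    agm v = agm w := by
  obtain ⟨hv₁, hv₂, -, hv₄⟩ := hagm v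
  obtain ⟨hw₁, hw₂, hw₃, hw₄⟩ := hagm w
  have hfst : (agm v).1.1 = (agm w).1.1 := by rw [hv₁, hw₁, hadd]
  rw [hfst] at hv₄
  have hsnd : (agm v).1.2 = (agm w).1.2 :=
    eq_of_sq_eq_of_isSquare_mul h (by rw [hv₂, hw₂, hmul]) hv₄ hw₃ hw₄
  exact Subtype.ext (Prod.ext hfst hsnd)

theorem eq_iff (hagm : IsAGMMap agm) (h : ¬IsSquare (-1 : F)) (v w : AdmPair F) :
    agm v = agm w ↔ w.1 = v.1 ∨ w.1 = v.1.swap := by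
  refine ⟨fun hvw => Prod.eq_or_eq_swap_of_add_eq_of_mul_eq (hagm.add_eq_add
    (two_ne_zero_of_not_isSquare_neg_one h) hvw) (hagm.mul_eq_mul hvw), ?_⟩
  rintro (hw | hw)
  · rw [Subtype.ext hw]
  · exact hagm.eq_of_add_eq_of_mul_eq h (by rw [hw, Prod.fst_swap, Prod.snd_swap, add_comm])
      (by rw [hw, Prod.fst_swap, Prod.snd_swap, mul_comm])

theorem preimage_singleton (hagm : IsAGMMap agm) (h : ¬IsSquare (-1 : F)) (v : AdmPair F) :
    agm ⁻¹' {agm v} = {v, v.swap} := by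
  ext w
  rw [Set.mem_preimage, Set.mem_singleton_iff, eq_comm, hagm.eq_iff h, Set.mem_insert_iff,
    Set.mem_singleton_iff]
  exact or_congr Subtype.val_injective.eq_iff (Subtype.val_injective.eq_iff (b := v.swap))

theorem ncard_preimage_singleton (hagm : IsAGMMap agm) (h : ¬IsSquare (-1 : F))
    (v : AdmPair F) : (agm ⁻¹' {agm v}).ncard = 2 := by
  rw [hagm.preimage_singleton h, Set.ncard_pair v.swap_ne_self.symm]

end IsAGMMap

/-- For a finite field with `q ≡ 3 (mod 4)` elements, `AGM(a, b) = AGM(c, d)` iff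
`(c, d) = (a, b)` or `(c, d) = (b, a)`; in particular every admissible pair in the image of
the AGM map has exactly two preimages. -/
theorem agm_eq_agm_iff_eq_or_swap
    (F : Type*) [Field F] [Fintype F] (hq : Fintype.card F % 4 = 3)
    (agm : AdmPair F → AdmPair F) (hagm : IsAGMMap agm) :
    (∀ v w : AdmPair F, agm v = agm w ↔ (w.1 = v.1 ∨ w.1 = (v.1.2, v.1.1))) ∧
    (∀ u : AdmPair F, u ∈ Set.range agm → Set.ncard {v : AdmPair F | agm v = u} = 2) := by
  have hneg : ¬IsSquare (-1 : F) := by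
    rw [FiniteField.isSquare_neg_one_iff, hq]
    decide
  refine ⟨hagm.eq_iff hneg, ?_⟩
  rintro _ ⟨v, rfl⟩
  exact hagm.ncard_preimage_singleton hneg v
end

section
/- Let F be a finite field with q elements, q ≡ 3 (mod 4), and let AGM denote the map sending an admissible pair (a, b) to the admissible pair ((a+b)/2, b′), where b′ is the unique element with b′² = ab and (a+b)b′/2 a nonzero square. Then for every admissible pair v, the pair AGM(v) is a periodic point of AGM: there exists n ≥ 1 with AGM^n(AGM(v)) = AGM(v). (Equivalently, every connected component of the functional graph of AGM consists of a cycle together with tentacles of length exactly one.) -/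
open Function Set

theorem Function.range_subset_periodicPts_of_injOn_range {α : Type*} [Finite α] {f : α → α}
    (hf : InjOn f (range f)) : range f ⊆ periodicPts f := by
  intro y hy
  have hmaps : MapsTo f (range f) (range f) := mapsTo_range f _
  obtain ⟨n, hn, hper⟩ :=
    mem_periodicPts.mp ((hmaps.restrict_inj.mpr hf).mem_periodicPts ⟨y, hy⟩)
  exact mk_mem_periodicPts hn (hper.map (g := Subtype.val) fun _ => rfl)

theorem eq_and_eq_or_eq_and_eq_of_add_eq_of_mul_eq {R : Type*} [CommRing R] [NoZeroDivisors R]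
    {a b c d : R} (hsum : a + b = c + d) (hprod : a * b = c * d) :
    a = c ∧ b = d ∨ a = d ∧ b = c := by
  have hroots : (a - c) * (a - d) = 0 := by linear_combination a * hsum - hprod
  rcases mul_eq_zero.mp hroots with hac | had
  · have hac := sub_eq_zero.mp hac
    exact Or.inl ⟨hac, by linear_combination hsum - hac⟩
  · have had := sub_eq_zero.mp had
    exact Or.inr ⟨had, by linear_combination hsum - had⟩

section

variable {F : Type*} [Field F]

instance [Finite F] : Finite (AdmPair F) := Subtype.finite

theorem IsAdmissible.sq_sub_sq_ne_zero {a b : F} (h : IsAdmissible a b) : a ^ 2 - b ^ 2 ≠ 0 := by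
  obtain ⟨-, -, hab, habn, -⟩ := h
  rw [sq_sub_sq]
  exact mul_ne_zero (fun h => habn (eq_neg_of_add_eq_zero_left h)) (sub_ne_zero.mpr hab)

namespace IsAGMMap

variable {agm : AdmPair F → AdmPair F}

theorem isSquare_sq_sub_sq (hagm : IsAGMMap agm) (h2 : (2 : F) ≠ 0) (v : AdmPair F) :
    IsSquare ((agm v).1.1 ^ 2 - (agm v).1.2 ^ 2) := by
  obtain ⟨hfst, hsnd, -⟩ := hagm v
  refine ⟨(v.1.1 - v.1.2) / 2, ?_⟩
  rw [hfst, hsnd]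
  field_simp
  ring

theorem injOn_range (hagm : IsAGMMap agm) (h2 : (2 : F) ≠ 0) (hns : ¬IsSquare (-1 : F)) :
    InjOn agm (range agm) := by
  rintro _ ⟨u₁, rfl⟩ _ ⟨u₂, rfl⟩ h
  set w₁ := agm u₁
  set w₂ := agm u₂
  obtain ⟨hfst₁, hsnd₁, -⟩ := hagm w₁
  obtain ⟨hfst₂, hsnd₂, -⟩ := hagm w₂
  have hsum : w₁.1.1 + w₁.1.2 = w₂.1.1 + w₂.1.2 :=
    (div_left_inj' h2).mp (hfst₁.symm.trans (h ▸ hfst₂))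
  have hprod : w₁.1.1 * w₁.1.2 = w₂.1.1 * w₂.1.2 := by rw [← hsnd₁, ← hsnd₂, h]
  rcases eq_and_eq_or_eq_and_eq_of_add_eq_of_mul_eq hsum hprod with ⟨hfst, hsnd⟩ | ⟨hfst, hsnd⟩
  · exact Subtype.ext (Prod.ext hfst hsnd)
  · refine absurd ?_ hns
    have hneg : (-1 : F) = (w₂.1.1 ^ 2 - w₂.1.2 ^ 2) / (w₁.1.1 ^ 2 - w₁.1.2 ^ 2) := by
      rw [eq_div_iff w₁.2.sq_sub_sq_ne_zero, ← hfst, ← hsnd]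
      ring
    rw [hneg]
    exact (hagm.isSquare_sq_sub_sq h2 u₂).div (hagm.isSquare_sq_sub_sq h2 u₁)

end IsAGMMap

end

/-- For a finite field with `q ≡ 3 (mod 4)` elements, the image of every admissible pair under
the AGM map is a periodic point of the AGM map: every connected component of the functional
graph consists of a cycle with tentacles of length exactly one. -/
theorem agm_image_is_periodic
    (F : Type*) [Field F] [Fintype F] (hq : Fintype.card F % 4 = 3)
    (agm : AdmPair F → AdmPair F) (hagm : IsAGMMap agm) :
    ∀ v : AdmPair F, ∃ n : ℕ, 1 ≤ n ∧ agm^[n] (agm v) = agm v := by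
  intro v
  have h2 : (2 : F) ≠ 0 :=
    Ring.two_ne_zero (by rw [Ne, FiniteField.even_card_iff_char_two]; omega)
  have hns : ¬IsSquare (-1 : F) := by rw [FiniteField.isSquare_neg_one_iff]; omega
  obtain ⟨n, hn, hper⟩ := mem_periodicPts.mp
    (range_subset_periodicPts_of_injOn_range (hagm.injOn_range h2 hns) (mem_range_self v))
  exact ⟨n, hn, hper⟩
end

section
/- Let F be a finite field with q elements, q ≡ 3 (mod 4). For every λ ∈ F that is a nonzero square with λ ≠ 1, the number of admissible pairs (a, b) in F with b²/a² = λ is exactly q − 1. Consequently, the set of values b²/a² over all admissible pairs (a, b) is precisely the set of nonzero squares λ ≠ 1, which has (q − 3)/2 elements. -/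
/-!
Admissibility is invariant under scaling by `a ≠ 0`, so the admissible pairs are exactly the
pairs `(a, a t)` with `a ≠ 0` and `(1, t)` admissible, i.e. `t` a nonzero square other than `±1`;
moreover `b² / a² = t²`. When `-1` is not a square, squaring is injective on squares, and in a
finite field every square `l` has a square root that is itself a square (one of `±c` where
`l = c²`). Hence each nonzero square `l ≠ 1` equals `t²` for exactly one admissible `t`, and
its fibre has `q - 1` elements. Finally the nonzero squares and their negatives partition
`Fˣ`, so there are `(q - 1) / 2` nonzero squares.
-/

section Field

variable {F : Type*} [Field F]

lemma isSquare_mul_mul_self_iff {x a : F} (ha : a ≠ 0) : IsSquare (x * (a * a)) ↔ IsSquare x :=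
  ⟨fun h ↦ by simpa [ha] using h.div (.mul_self a), fun h ↦ h.mul (.mul_self a)⟩

lemma isAdmissible_mul_mul_iff {c : F} (hc : c ≠ 0) {a b : F} :
    IsAdmissible (c * a) (c * b) ↔ IsAdmissible a b := by
  rw [IsAdmissible, IsAdmissible, show c * a * (c * b) = a * b * (c * c) by ring,
    isSquare_mul_mul_self_iff hc, ← mul_neg]
  simp only [ne_eq, mul_eq_zero, hc, false_or, mul_right_inj' hc]

lemma isAdmissible_one_iff {t : F} :
    IsAdmissible 1 t ↔ t ≠ 0 ∧ t ≠ 1 ∧ t ≠ -1 ∧ IsSquare t := by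
  rw [IsAdmissible, one_mul, ne_comm (b := t), ne_comm (b := -t), ne_eq (-t), neg_eq_iff_eq_neg]
  simp only [ne_eq, one_ne_zero, not_false_eq_true, true_and]

variable (F) in
def admPairEquiv : AdmPair F ≃ {t : F // IsAdmissible 1 t} × {a : F // a ≠ 0} where
  toFun v := (⟨v.1.2 / v.1.1, by
    rw [← isAdmissible_mul_mul_iff v.2.1, mul_one, mul_div_cancel₀ _ v.2.1]; exact v.2⟩,
    ⟨v.1.1, v.2.1⟩)
  invFun p := ⟨(p.2, p.2 * p.1), by simpa using (isAdmissible_mul_mul_iff p.2.2).2 p.1.2⟩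
  left_inv v := Subtype.ext <| Prod.ext rfl (mul_div_cancel₀ _ v.2.1)
  right_inv p := Prod.ext (Subtype.ext (mul_div_cancel_left₀ _ p.2.2)) rfl

lemma sq_admPairEquiv_fst (v : AdmPair F) :
    ((admPairEquiv F v).1 : F) ^ 2 = v.1.2 ^ 2 / v.1.1 ^ 2 :=
  div_pow _ _ _

lemma card_admPair_sq_div_sq_eq (l : F) :
    Nat.card {v : AdmPair F // v.1.2 ^ 2 / v.1.1 ^ 2 = l} =
      Nat.card {t : F // IsAdmissible 1 t ∧ t ^ 2 = l} * Nat.card {a : F // a ≠ 0} := by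
  rw [← Nat.card_prod]
  refine Nat.card_congr <| ((admPairEquiv F).subtypeEquiv fun v ↦ ?_).trans <|
    Equiv.prodSubtypeFstEquivSubtypeProd.trans <|
      (Equiv.subtypeSubtypeEquivSubtypeInter _ _).prodCongr (Equiv.refl _)
  rw [sq_admPairEquiv_fst]

lemma exists_admPair_sq_div_sq_eq_iff (l : F) :
    (∃ v : AdmPair F, v.1.2 ^ 2 / v.1.1 ^ 2 = l) ↔ ∃ t : F, IsAdmissible 1 t ∧ t ^ 2 = l := by
  constructor
  · rintro ⟨v, rfl⟩
    exact ⟨_, (admPairEquiv F v).1.2, sq_admPairEquiv_fst v⟩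
  · rintro ⟨t, ht, rfl⟩
    refine ⟨(admPairEquiv F).symm (⟨t, ht⟩, ⟨1, one_ne_zero⟩), ?_⟩
    rw [← sq_admPairEquiv_fst, Equiv.apply_symm_apply]

lemma injOn_sq_setOf_isSquare (h : ¬IsSquare (-1 : F)) :
    Set.InjOn (· ^ 2) {t : F | IsSquare t} := by
  intro s hs t ht hst
  obtain rfl | ht0 := eq_or_ne t 0
  · simpa using hst
  refine (sq_eq_sq_iff_eq_or_eq_neg.1 hst).resolve_right ?_
  rintro rfl
  exact h (neg_div_self ht0 ▸ hs.div ht)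

end Field

section FiniteField

variable {F : Type*} [Field F] [Fintype F]

lemma FiniteField.isSquare_mul_of_not_isSquare {a b : F} (ha : ¬IsSquare a) (hb : ¬IsSquare b) :
    IsSquare (a * b) := by
  classical
  have ha0 : a ≠ 0 := by rintro rfl; exact ha .zero
  have hb0 : b ≠ 0 := by rintro rfl; exact hb .zero
  rw [← quadraticChar_one_iff_isSquare (mul_ne_zero ha0 hb0), map_mul,
    quadraticChar_neg_one_iff_not_isSquare.2 ha, quadraticChar_neg_one_iff_not_isSquare.2 hb]
  norm_num

variable (h : ¬IsSquare (-1 : F))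
include h

lemma isSquare_neg_of_not_isSquare {x : F} (hx : ¬IsSquare x) : IsSquare (-x) := by
  simpa using FiniteField.isSquare_mul_of_not_isSquare h hx

lemma exists_isSquare_sq_eq {l : F} (hl : IsSquare l) : ∃ t, IsSquare t ∧ t ^ 2 = l := by
  obtain ⟨c, rfl⟩ := hl
  by_cases hc : IsSquare c
  · exact ⟨c, hc, sq c⟩
  · exact ⟨-c, isSquare_neg_of_not_isSquare h hc, by ring⟩

lemma exists_isAdmissible_one_sq_eq_iff {l : F} :
    (∃ t, IsAdmissible 1 t ∧ t ^ 2 = l) ↔ IsSquare l ∧ l ≠ 0 ∧ l ≠ 1 := by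
  simp only [isAdmissible_one_iff]
  constructor
  · rintro ⟨t, ⟨ht0, ht1, htn1, -⟩, rfl⟩
    exact ⟨.sq t, pow_ne_zero 2 ht0, by simp [ht1, htn1]⟩
  · rintro ⟨hl, hl0, hl1⟩
    obtain ⟨t, ht, rfl⟩ := exists_isSquare_sq_eq h hl
    refine ⟨t, ⟨?_, ?_, ?_, ht⟩, rfl⟩ <;> rintro rfl <;> simp at hl0 hl1

lemma card_isAdmissible_one_sq_eq {l : F} (hl : IsSquare l) (hl0 : l ≠ 0) (hl1 : l ≠ 1) :
    Nat.card {t : F // IsAdmissible 1 t ∧ t ^ 2 = l} = 1 := by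
  obtain ⟨t, ht⟩ := (exists_isAdmissible_one_sq_eq_iff h).2 ⟨hl, hl0, hl1⟩
  refine Nat.card_eq_one_iff_exists.2 ⟨⟨t, ht⟩, fun ⟨s, hs, hsl⟩ ↦ Subtype.ext ?_⟩
  exact injOn_sq_setOf_isSquare h (isAdmissible_one_iff.1 hs).2.2.2
    (isAdmissible_one_iff.1 ht.1).2.2.2 (hsl.trans ht.2.symm)

lemma two_mul_ncard_isSquare_ne_zero :
    2 * {x : F | IsSquare x ∧ x ≠ 0}.ncard = Fintype.card F - 1 := by
  set S := {x : F | IsSquare x ∧ x ≠ 0}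
  have hunion : S ∪ -S = {0}ᶜ := by
    ext x
    simp only [S, Set.mem_union, Set.mem_neg, Set.mem_ofPred_eq, neg_ne_zero, Set.mem_compl_iff,
      Set.mem_singleton_iff, ← or_and_right, and_iff_right_iff_imp]
    exact fun _ ↦ or_iff_not_imp_left.2 (isSquare_neg_of_not_isSquare h)
  have hdisj : Disjoint S (-S) := by
    refine Set.disjoint_left.2 fun x ⟨hx, hx0⟩ ⟨hnx, _⟩ ↦ h ?_
    simpa [hx0] using hnx.div hx
  have hcompl := Set.ncard_add_ncard_compl ({0} : Set F)
  rw [two_mul]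
  nth_rw 2 [← Set.ncard_neg S]
  rw [← Set.ncard_union_eq hdisj, hunion, Fintype.card_eq_nat_card, ← hcompl, Set.ncard_singleton,
    add_tsub_cancel_left]

end FiniteField

/-- For a finite field `F` with `q ≡ 3 (mod 4)` elements: every nonzero square `λ ≠ 1` arises
as `b²/a²` for exactly `q - 1` admissible pairs `(a, b)`; the set of values `b²/a²` over all
admissible pairs is precisely the set of nonzero squares `≠ 1`; and this set has `(q - 3)/2`
elements. -/
theorem card_admissible_pairs_with_lambda
    (F : Type*) [Field F] [Fintype F] (hq : Fintype.card F % 4 = 3) :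
    (∀ l : F, IsSquare l → l ≠ 0 → l ≠ 1 →
      Nat.card {v : AdmPair F // v.1.2 ^ 2 / v.1.1 ^ 2 = l} = Fintype.card F - 1) ∧
    {x : F | ∃ v : AdmPair F, v.1.2 ^ 2 / v.1.1 ^ 2 = x} =
      {l : F | IsSquare l ∧ l ≠ 0 ∧ l ≠ 1} ∧
    Set.ncard {l : F | IsSquare l ∧ l ≠ 0 ∧ l ≠ 1} = (Fintype.card F - 3) / 2 := by
  have h : ¬IsSquare (-1 : F) := fun h ↦ FiniteField.isSquare_neg_one_iff.1 h hq
  refine ⟨fun l hl hl0 hl1 ↦ ?_, ?_, ?_⟩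
  · rw [card_admPair_sq_div_sq_eq, card_isAdmissible_one_sq_eq h hl hl0 hl1, one_mul,
      ← Nat.card_congr unitsEquivNeZero, Nat.card_units, Nat.card_eq_fintype_card]
  · ext l
    exact (exists_admPair_sq_div_sq_eq_iff l).trans (exists_isAdmissible_one_sq_eq_iff h)
  · have hsq := two_mul_ncard_isSquare_ne_zero h
    have hdiff : {l : F | IsSquare l ∧ l ≠ 0 ∧ l ≠ 1} = {l : F | IsSquare l ∧ l ≠ 0} \ {1} := by
      ext
      simp [and_assoc]
    have hone : (1 : F) ∈ {l : F | IsSquare l ∧ l ≠ 0} := ⟨.one, one_ne_zero⟩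
    rw [hdiff, Set.ncard_sdiff_singleton_of_mem hone]
    omega
end

section
/- Let F be a finite field with q elements of characteristic p > 3 with q ≡ 3 (mod 4) (so −1 is not a square in F), and let λ ∈ F with λ ≠ 0, 1. Then E_{1−λ} is the quadratic twist of E_λ by −1, and consequently #E_λ(F) + #E_{1−λ}(F) = 2(q + 1). -/
/-- The Legendre elliptic curve `y² = x(x-1)(x-λ)`, as the Weierstrass curve with coefficients
`(a₁, a₂, a₃, a₄, a₆) = (0, -(λ+1), 0, λ, 0)`. -/
def Legendre (F : Type*) [Field F] (l : F) : WeierstrassCurve F := ⟨0, -(l + 1), 0, l, 0⟩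

/-- The quadratic twist by `d` of a Weierstrass curve of the form `y² = x³ + a₂x² + a₄x + a₆`
(i.e. with `a₁ = a₃ = 0`): the curve `y² = x³ + d*a₂x² + d²*a₄x + d³*a₆`. -/
def quadTwist {F : Type*} [Field F] (W : WeierstrassCurve F) (d : F) : WeierstrassCurve F :=
  ⟨0, d * W.a₂, 0, d ^ 2 * W.a₄, d ^ 3 * W.a₆⟩

/-!
The affine points of `y² = f(x)` over `𝔽_q` (odd `q`) number `q + ∑ₓ χ(f(x))`, `χ` the quadratic
character. Twisting by `d` and substituting `x ↦ d x` multiplies every `f(x)` by `d³`, so for a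
nonsquare `d` the character sum changes sign and the two curves have `2(q + 1)` points together.
For `q ≡ 3 (mod 4)` the element `-1` is a nonsquare, and the twist `y² = x(x+1)(x+λ)` of `E_λ`
by `-1` becomes `E_{1-λ}` after the translation `x ↦ x - 1`.
-/

namespace WeierstrassCurve.Affine

variable {F : Type*} [Field F] (W : WeierstrassCurve F)

noncomputable def pointEquivOption (hΔ : W.Δ ≠ 0) :
    W.toAffine.Point ≃ Option {xy : F × F // W.toAffine.Equation xy.1 xy.2} where
  toFun
    | .zero => none
    | .some x y h => some ⟨(x, y), h.1⟩
  invFun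
    | none => .zero
    | some ⟨(x, y), h⟩ => .some x y ((W.toAffine.equation_iff_nonsingular_of_Δ_ne_zero hΔ).mp h)
  left_inv P := by cases P <;> rfl
  right_inv o := by rcases o with _ | ⟨⟨x, y⟩, h⟩ <;> rfl

lemma equation_variableChange_iff (C : VariableChange F) (x y : F) :
    (C • W).toAffine.Equation x y ↔
      W.toAffine.Equation (C.u ^ 2 * x + C.r) (C.u ^ 3 * y + C.u ^ 2 * C.s * x + C.t) := by
  have hu : (C.u : F) ≠ 0 := C.u.ne_zero
  simp only [equation_iff, variableChange_def, Units.val_inv_eq_inv_val]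
  constructor <;> intro h
  · field_simp at h
    linear_combination h
  · field_simp
    linear_combination h

noncomputable def equationEquivOfVariableChange (C : VariableChange F) :
    {xy : F × F // (C • W).toAffine.Equation xy.1 xy.2} ≃
      {xy : F × F // W.toAffine.Equation xy.1 xy.2} where
  toFun P := ⟨(C.u ^ 2 * P.1.1 + C.r, C.u ^ 3 * P.1.2 + C.u ^ 2 * C.s * P.1.1 + C.t),
    (equation_variableChange_iff W C _ _).mp P.2⟩
  invFun P := ⟨((P.1.1 - C.r) / C.u ^ 2, (P.1.2 - C.t - C.s * (P.1.1 - C.r)) / C.u ^ 3), by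
    have hu : (C.u : F) ≠ 0 := C.u.ne_zero
    rw [equation_variableChange_iff]
    convert P.2 using 1 <;> field_simp <;> ring⟩
  left_inv P := by
    have hu : (C.u : F) ≠ 0 := C.u.ne_zero
    ext <;> field_simp <;> ring
  right_inv P := by
    have hu : (C.u : F) ≠ 0 := C.u.ne_zero
    ext <;> field_simp <;> ring

noncomputable def pointEquivOfVariableChange (C : VariableChange F) (hΔ : W.Δ ≠ 0) :
    (C • W).toAffine.Point ≃ W.toAffine.Point :=
  have hΔC : (C • W).Δ ≠ 0 := by
    rw [variableChange_Δ]
    exact mul_ne_zero (pow_ne_zero _ C.u⁻¹.ne_zero) hΔ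
  (pointEquivOption _ hΔC).trans <|
    (Equiv.optionCongr (equationEquivOfVariableChange W C)).trans (pointEquivOption W hΔ).symm

open Finset in
lemma natCard_equation_eq_of_a₁_a₃ [Fintype F] [DecidableEq F] (hF : ringChar F ≠ 2)
    (h₁ : W.a₁ = 0) (h₃ : W.a₃ = 0) :
    (Nat.card {xy : F × F // W.toAffine.Equation xy.1 xy.2} : ℤ) =
      Fintype.card F + ∑ x : F, quadraticChar F (x ^ 3 + W.a₂ * x ^ 2 + W.a₄ * x + W.a₆) := by
  have hfiber (x : F) : {y : F // W.toAffine.Equation x y} ≃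
      {y : F // y ∈ {y : F | y ^ 2 = x ^ 3 + W.a₂ * x ^ 2 + W.a₄ * x + W.a₆}} :=
    Equiv.subtypeEquivRight fun y ↦ by simp [equation_iff, h₁, h₃]
  have hfiber_card (x : F) : (Nat.card {y : F // W.toAffine.Equation x y} : ℤ) =
      quadraticChar F (x ^ 3 + W.a₂ * x ^ 2 + W.a₄ * x + W.a₆) + 1 := by
    rw [Nat.card_congr (hfiber x), ← quadraticChar_card_sqrts hF, Set.toFinset_card,
      Nat.card_eq_fintype_card]
  rw [Nat.card_congr (Equiv.subtypeProdEquivSigmaSubtype fun x y ↦ W.toAffine.Equation x y),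
    Nat.card_sigma, Nat.cast_sum]
  simp only [hfiber_card, sum_add_distrib, sum_const, card_univ, nsmul_eq_mul, mul_one]
  ring

end WeierstrassCurve.Affine

open WeierstrassCurve

section QuadTwist

variable {F : Type*} [Field F] (W : WeierstrassCurve F)

lemma quadTwist_Δ (h₁ : W.a₁ = 0) (h₃ : W.a₃ = 0) (d : F) : (quadTwist W d).Δ = d ^ 6 * W.Δ := by
  simp only [Δ, b₂, b₄, b₆, b₈, quadTwist, h₁, h₃]
  ring

lemma sum_quadraticChar_quadTwist [Fintype F] [DecidableEq F] {d : F} (hd : d ≠ 0) :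
    ∑ x : F, quadraticChar F
        (x ^ 3 + (quadTwist W d).a₂ * x ^ 2 + (quadTwist W d).a₄ * x + (quadTwist W d).a₆) =
      quadraticChar F d * ∑ x : F, quadraticChar F (x ^ 3 + W.a₂ * x ^ 2 + W.a₄ * x + W.a₆) := by
  have hd3 : quadraticChar F (d ^ 3) = quadraticChar F d := by
    rw [map_pow, pow_succ, quadraticChar_sq_one hd, one_mul]
  rw [Finset.mul_sum]
  refine (Fintype.sum_equiv (Equiv.mulLeft₀ d hd) _ _ fun x ↦ ?_).symm
  rw [Equiv.mulLeft₀_apply, ← hd3, ← map_mul]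
  congr 1
  simp only [quadTwist]
  ring

open WeierstrassCurve.Affine in
theorem natCard_point_add_natCard_point_quadTwist [Fintype F] (hF : ringChar F ≠ 2)
    (h₁ : W.a₁ = 0) (h₃ : W.a₃ = 0) (hΔ : W.Δ ≠ 0) {d : F} (hd : ¬IsSquare d) :
    Nat.card W.toAffine.Point + Nat.card (quadTwist W d).toAffine.Point =
      2 * (Fintype.card F + 1) := by
  classical
  have hd0 : d ≠ 0 := fun h ↦ hd (h ▸ IsSquare.zero)
  have hΔd : (quadTwist W d).Δ ≠ 0 := by
    rw [quadTwist_Δ W h₁ h₃]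
    exact mul_ne_zero (pow_ne_zero _ hd0) hΔ
  rw [Nat.card_congr (pointEquivOption W hΔ), Nat.card_congr (pointEquivOption _ hΔd),
    Finite.card_option, Finite.card_option]
  have hW := natCard_equation_eq_of_a₁_a₃ W hF h₁ h₃
  have hWd := natCard_equation_eq_of_a₁_a₃ (quadTwist W d) hF rfl rfl
  rw [sum_quadraticChar_quadTwist W hd0, quadraticChar_neg_one_iff_not_isSquare.mpr hd] at hWd
  zify
  linear_combination hW + hWd

end QuadTwist

section Legendre

variable {F : Type*} [Field F]

lemma legendre_Δ (l : F) : (Legendre F l).Δ = 16 * l ^ 2 * (l - 1) ^ 2 := by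
  simp only [Δ, b₂, b₄, b₆, b₈, Legendre]
  ring

lemma legendre_Δ_ne_zero (hF : ringChar F ≠ 2) {l : F} (hl0 : l ≠ 0) (hl1 : l ≠ 1) :
    (Legendre F l).Δ ≠ 0 := by
  have h16 : (16 : F) ≠ 0 := by
    rw [show (16 : F) = 2 ^ 4 by norm_num]
    exact pow_ne_zero _ (Ring.two_ne_zero hF)
  rw [legendre_Δ]
  exact mul_ne_zero (mul_ne_zero h16 (pow_ne_zero _ hl0)) (pow_ne_zero _ (sub_ne_zero.mpr hl1))

lemma variableChange_quadTwist_legendre (l : F) :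
    (⟨1, -1, 0, 0⟩ : VariableChange F) • quadTwist (Legendre F l) (-1) = Legendre F (1 - l) := by
  ext <;> simp [variableChange_def, quadTwist, Legendre] <;> ring

end Legendre

theorem legendre_one_sub_eq_neg_one_twist_general
    (F : Type*) [Field F] [Fintype F]
    (hq4 : Fintype.card F % 4 = 3) (l : F) (hl0 : l ≠ 0) (hl1 : l ≠ 1) :
    (∃ C : WeierstrassCurve.VariableChange F,
      C • quadTwist (Legendre F l) (-1) = Legendre F (1 - l)) ∧
    Nat.card (Legendre F l).toAffine.Point +
      Nat.card (Legendre F (1 - l)).toAffine.Point = 2 * (Fintype.card F + 1) := by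
  have hF : ringChar F ≠ 2 := by rw [Ne, FiniteField.even_card_iff_char_two]; omega
  have hΔ := legendre_Δ_ne_zero hF hl0 hl1
  have hΔtwist : (quadTwist (Legendre F l) (-1)).Δ ≠ 0 := by
    rwa [quadTwist_Δ _ rfl rfl, Even.neg_one_pow (by decide), one_mul]
  have hneg : ¬IsSquare (-1 : F) := by rw [FiniteField.isSquare_neg_one_iff]; omega
  refine ⟨⟨_, variableChange_quadTwist_legendre l⟩, ?_⟩
  rw [← variableChange_quadTwist_legendre,
    Nat.card_congr (Affine.pointEquivOfVariableChange _ _ hΔtwist)]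
  exact natCard_point_add_natCard_point_quadTwist _ hF rfl rfl hΔ hneg

/-- For a finite field `F` of characteristic `p > 3` with `q ≡ 3 (mod 4)` elements and
`λ ≠ 0, 1`, the curve `E_{1-λ}` is the quadratic twist of `E_λ` by `-1` (i.e. isomorphic to it
over `F`), and consequently `#E_λ(F) + #E_{1-λ}(F) = 2(q + 1)`. -/
theorem legendre_one_sub_eq_neg_one_twist
    (F : Type*) [Field F] [Fintype F] (p : ℕ) [CharP F p] (hp : p.Prime) (hp3 : 3 < p)
    (hq4 : Fintype.card F % 4 = 3) (l : F) (hl0 : l ≠ 0) (hl1 : l ≠ 1) :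
    (∃ C : WeierstrassCurve.VariableChange F,
      C • quadTwist (Legendre F l) (-1) = Legendre F (1 - l)) ∧
    Nat.card (Legendre F l).toAffine.Point +
      Nat.card (Legendre F (1 - l)).toAffine.Point = 2 * (Fintype.card F + 1) :=
  legendre_one_sub_eq_neg_one_twist_general F hq4 l hl0 hl1
end
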